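/- Let J ≥ 2 be an integer, M₁ < M₂ real, U > 0 with J·U < M₂ - M₁, and let η_J be the convolution of J copies of U⁻¹·χ_{[0,U]} with χ_{[M₁, M₂ - J·U]}. Then η_J is (J-1) times continuously differentiable on ℝ. -/

import Mathlib

open MeasureTheory Set

/-! Convolving with `U⁻¹ · χ_{[0,U]}` is the difference quotient `x ↦ U⁻¹ (F x - F (x - U))` of a
primitive `F`. Hence it makes an interval-integrable function continuous and, by the fundamental
theorem of calculus, turns a `C^n` function into a `C^(n+1)` one. The first of the `J`
convolutions applied to the indicator gives continuity, each of the remaining `J - 1` one more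
derivative. -/

/-- Convolution with the normalized kernel `U⁻¹ · χ_{[0,U]}`. -/
noncomputable def convBase (U : ℝ) (f : ℝ → ℝ) : ℝ → ℝ :=
  fun x => ∫ t, ((Icc (0:ℝ) U).indicator (fun _ => U⁻¹) t) * f (x - t)

/-- `η_J`: the convolution of `J` copies of `U⁻¹·χ_{[0,U]}` with `χ_{[M₁, M₂ - J·U]}`. -/
noncomputable def etaJ (J : ℕ) (M₁ M₂ U : ℝ) : ℝ → ℝ :=
  (convBase U)^[J] ((Icc M₁ (M₂ - J * U)).indicator (fun _ => (1:ℝ)))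

theorem contDiff_succ_primitive {E : Type*} [NormedAddCommGroup E] [NormedSpace ℝ E]
    [CompleteSpace E] {n : ℕ∞} {f : ℝ → E} (hf : ContDiff ℝ n f) (a : ℝ) :
    ContDiff ℝ (n + 1) (fun x => ∫ t in a..x, f t) := by
  have hderiv (x : ℝ) : HasDerivAt (fun u => ∫ t in a..u, f t) (f x) x :=
    (hf.continuous.integral_hasStrictDerivAt a x).hasDerivAt
  rw [contDiff_succ_iff_deriv]
  refine ⟨fun x => (hderiv x).differentiableAt, by simp, ?_⟩
  rwa [show deriv (fun u => ∫ t in a..u, f t) = f from funext fun x => (hderiv x).deriv]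

section convBase

variable {U : ℝ} {f : ℝ → ℝ}

theorem convBase_eq_sub_primitive (hU : 0 ≤ U) (hf : ∀ a b, IntervalIntegrable f volume a b) :
    convBase U f = fun x => U⁻¹ * ((∫ t in (0:ℝ)..x, f t) - ∫ t in (0:ℝ)..(x - U), f t) := by
  funext x
  calc convBase U f x = ∫ t in Icc 0 U, U⁻¹ * f (x - t) := by
        rw [← integral_indicator measurableSet_Icc]
        refine integral_congr_ae (.of_forall fun t => ?_)
        exact (indicator_mul_left _ _ (fun t => f (x - t))).symm
    _ = U⁻¹ * ∫ t in (x - U)..x, f t := by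
        rw [integral_Icc_eq_integral_Ioc, ← intervalIntegral.integral_of_le hU,
          intervalIntegral.integral_const_mul, intervalIntegral.integral_comp_sub_left, sub_zero]
    _ = _ := by rw [intervalIntegral.integral_interval_sub_left (hf 0 x) (hf 0 (x - U))]

theorem continuous_convBase (hU : 0 ≤ U) (hf : ∀ a b, IntervalIntegrable f volume a b) :
    Continuous (convBase U f) := by
  have hF := intervalIntegral.continuous_primitive hf 0
  rw [convBase_eq_sub_primitive hU hf]
  fun_prop

theorem ContDiff.convBase {n : ℕ∞} (hU : 0 ≤ U) (hf : ContDiff ℝ n f) :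
    ContDiff ℝ (n + 1) (convBase U f) := by
  have hF := contDiff_succ_primitive hf 0
  rw [convBase_eq_sub_primitive hU hf.continuous.intervalIntegrable]
  fun_prop

theorem contDiff_iterate_convBase (hU : 0 ≤ U) (hf : ∀ a b, IntervalIntegrable f volume a b)
    (k : ℕ) : ContDiff ℝ k ((convBase U)^[k + 1] f) := by
  induction k with
  | zero => simpa using continuous_convBase hU hf
  | succ k ih =>
    rw [Function.iterate_succ_apply']
    exact_mod_cast ih.convBase hU

end convBase

theorem etaJ_contDiff_general
    (J : ℕ) (hJ : 2 ≤ J) (M₁ M₂ U : ℝ) (hU : 0 < U) :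
    ContDiff ℝ ((J - 1 : ℕ) : ℕ∞) (etaJ J M₁ M₂ U) := by
  have hχ : Integrable ((Icc M₁ (M₂ - J * U)).indicator fun _ => (1:ℝ)) :=
    (integrable_indicator_iff measurableSet_Icc).2 (integrableOn_const measure_Icc_lt_top.ne)
  have h := contDiff_iterate_convBase hU.le (fun _ _ => hχ.intervalIntegrable) (J - 1)
  rwa [Nat.sub_add_cancel (by omega)] at h

theorem etaJ_contDiff
    (J : ℕ) (hJ : 2 ≤ J) (M₁ M₂ U : ℝ) (hM : M₁ < M₂) (hU : 0 < U)
    (hJU : (J : ℝ) * U < M₂ - M₁) :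
    ContDiff ℝ ((J - 1 : ℕ) : ℕ∞) (etaJ J M₁ M₂ U) :=
  etaJ_contDiff_general J hJ M₁ M₂ U hU
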